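/- Let A ∈ ℝ^{n×d}, C ∈ ℝ^{d×k} have integer entries in [−Δ₂,Δ₂], let w = 3√Δ₁·Δ₂²·n·d for some Δ₁ ≥ 1, and let B = [Aᵀ, wC]ᵀ ∈ ℝ^{(n+k)×d}. If N ∈ ℝ^{(n+k)×(2k)} satisfies ‖BBᵀ − NNᵀ‖_F² ≤ Δ₁·‖BBᵀ − (BBᵀ)_{2k}‖_F², then for every i ≤ n and j ≤ k, rounding (NNᵀ)_{i, n+j} to the nearest integer multiple of w yields exactly w·(AC)_{i,j}. -/

import Mathlib

/-!
Zeroing the `A Aᵀ` block of `B Bᵀ = [[A Aᵀ, w A C], [w Cᵀ Aᵀ, w² Cᵀ C]]` leaves a matrix of rank at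
most `2k`, so the optimal rank-`2k` error is at most `‖A Aᵀ‖_F ≤ n d Δ₂²`, and `N Nᵀ` is within
`√Δ₁ n d Δ₂² = w / 3` of `B Bᵀ` in Frobenius norm, hence entrywise. So `(N Nᵀ)_{i,n+j}` lies within
`w / 3` of `w (A C)_{ij}`, an integer multiple of `w`, and rounding recovers it.
-/

open Matrix BigOperators

noncomputable def frob {m n : Type*} [Fintype m] [Fintype n] (M : Matrix m n ℝ) : ℝ :=
  Real.sqrt (∑ i, ∑ j, (M i j) ^ 2)

def IsBestRank {ι : Type*} [Fintype ι] [DecidableEq ι] (r : ℕ) (M Mr : Matrix ι ι ℝ) : Prop :=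
  Mr.rank ≤ r ∧ ∀ L : Matrix ι ι ℝ, L.rank ≤ r → frob (M - Mr) ≤ frob (M - L)

section Frobenius

variable {m n : Type*} [Fintype m] [Fintype n]

lemma frob_nonneg (M : Matrix m n ℝ) : 0 ≤ frob M :=
  Real.sqrt_nonneg _

lemma abs_apply_le_frob (M : Matrix m n ℝ) (a : m) (b : n) : |M a b| ≤ frob M := by
  rw [← Real.sqrt_sq_eq_abs]
  refine Real.sqrt_le_sqrt ?_
  calc M a b ^ 2 ≤ ∑ j, M a j ^ 2 :=
        Finset.single_le_sum (fun j _ => sq_nonneg (M a j)) (Finset.mem_univ b)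
    _ ≤ ∑ i, ∑ j, M i j ^ 2 :=
        Finset.single_le_sum (f := fun i => ∑ j, M i j ^ 2)
          (fun i _ => Finset.sum_nonneg fun j _ => sq_nonneg _) (Finset.mem_univ a)

lemma frob_le_of_abs_apply_le {M : Matrix m n ℝ} {c : ℝ} (hM : ∀ i j, |M i j| ≤ c) :
    frob M ≤ Real.sqrt (Fintype.card m * Fintype.card n * c ^ 2) := by
  refine Real.sqrt_le_sqrt ?_
  calc ∑ i, ∑ j, M i j ^ 2 ≤ ∑ _i : m, ∑ _j : n, c ^ 2 := by
        refine Finset.sum_le_sum fun i _ => Finset.sum_le_sum fun j _ => ?_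
        exact sq_le_sq' (abs_le.mp (hM i j)).1 (abs_le.mp (hM i j)).2
    _ = Fintype.card m * Fintype.card n * c ^ 2 := by
        simp only [Finset.sum_const, Finset.card_univ, nsmul_eq_mul]
        ring

lemma frob_fromBlocks_zero {m' n' : Type*} [Fintype m'] [Fintype n'] (M : Matrix m n ℝ) :
    frob (fromBlocks M 0 0 0 : Matrix (m ⊕ m') (n ⊕ n') ℝ) = frob M := by
  simp [frob, Fintype.sum_sum_type]

end Frobenius

lemma abs_mul_apply_le {l m n : Type*} [Fintype l] {A : Matrix m l ℝ} {B : Matrix l n ℝ}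
    {a b : ℝ} (hA : ∀ i j, |A i j| ≤ a) (hB : ∀ i j, |B i j| ≤ b) (i : m) (j : n) :
    |(A * B) i j| ≤ Fintype.card l * (a * b) := by
  calc |(A * B) i j| ≤ ∑ t, |A i t * B t j| := by
        rw [mul_apply]
        exact Finset.abs_sum_le_sum_abs _ _
    _ ≤ ∑ _t : l, a * b := by
        gcongr with t
        rw [abs_mul]
        exact mul_le_mul (hA i t) (hB t j) (abs_nonneg _) ((abs_nonneg _).trans (hA i t))
    _ = Fintype.card l * (a * b) := by simp

lemma exists_intCast_mul_apply {l m n : Type*} [Fintype l] {A : Matrix m l ℝ} {B : Matrix l n ℝ}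
    (hA : ∀ i j, ∃ z : ℤ, A i j = z) (hB : ∀ i j, ∃ z : ℤ, B i j = z) (i : m) (j : n) :
    ∃ z : ℤ, (A * B) i j = z := by
  choose A' hA' using hA
  choose B' hB' using hB
  exact ⟨∑ t, A' i t * B' t j, by simp [mul_apply, hA', hB']⟩

lemma rank_fromBlocks_zero₁₁_le {R m₁ m₂ n₁ n₂ : Type*} [CommRing R] [StrongRankCondition R]
    [Fintype m₂] [Fintype n₁] [Fintype n₂] [DecidableEq m₂] [DecidableEq n₂]
    (X : Matrix m₁ n₂ R) (Y : Matrix m₂ n₁ R) (Z : Matrix m₂ n₂ R) :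
    (fromBlocks 0 X Y Z).rank ≤ Fintype.card n₂ + Fintype.card m₂ := by
  have hfactor : fromBlocks 0 X Y Z =
      (fromBlocks X 0 0 1 : Matrix (m₁ ⊕ m₂) (n₂ ⊕ m₂) R) *
        (fromBlocks 0 1 Y Z : Matrix (n₂ ⊕ m₂) (n₁ ⊕ n₂) R) := by
    rw [fromBlocks_multiply]
    simp
  rw [hfactor]
  refine (rank_mul_le_left _ _).trans ((rank_le_card_width _).trans ?_)
  simp

lemma IsBestRank.frob_sub_le_frob_mul_transpose {m k d : Type*} [Fintype m] [Fintype k]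
    [Fintype d] [DecidableEq m] [DecidableEq k] {A : Matrix m d ℝ} {Y : Matrix k d ℝ}
    {r : ℕ} {K : Matrix (m ⊕ k) (m ⊕ k) ℝ}
    (hK : IsBestRank r (fromRows A Y * (fromRows A Y)ᵀ) K) (hr : 2 * Fintype.card k ≤ r) :
    frob (fromRows A Y * (fromRows A Y)ᵀ - K) ≤ frob (A * Aᵀ) := by
  have hgram : fromRows A Y * (fromRows A Y)ᵀ = fromBlocks (A * Aᵀ) (A * Yᵀ) (Y * Aᵀ) (Y * Yᵀ) := by
    rw [transpose_fromRows, fromRows_mul_fromCols]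
  calc frob (fromRows A Y * (fromRows A Y)ᵀ - K)
      ≤ frob (fromRows A Y * (fromRows A Y)ᵀ - fromBlocks 0 (A * Yᵀ) (Y * Aᵀ) (Y * Yᵀ)) :=
        hK.2 _ ((rank_fromBlocks_zero₁₁_le _ _ _).trans (by omega))
    _ = frob (fromBlocks (A * Aᵀ) 0 0 0 : Matrix (m ⊕ k) (m ⊕ k) ℝ) := by
        rw [hgram, sub_eq_add_neg, fromBlocks_neg, fromBlocks_add]
        simp
    _ = frob (A * Aᵀ) := frob_fromBlocks_zero _

lemma round_div_eq_of_abs_sub_mul_lt {α : Type*} [Field α] [LinearOrder α] [IsStrictOrderedRing α]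
    [FloorRing α] {x w : α} {z : ℤ} (hw : 0 < w) (h : |x - w * z| < w / 2) :
    round (x / w) = z := by
  rw [abs_sub_lt_iff] at h
  rw [round_eq_iff, Set.mem_Ico, le_div_iff₀ hw, div_lt_iff₀ hw]
  constructor <;> linarith

theorem stmt15_general (n d k : ℕ) (A : Matrix (Fin n) (Fin d) ℝ) (C : Matrix (Fin d) (Fin k) ℝ)
    (Δ₁ Δ₂ w : ℝ)
    (hA : ∀ i j, (∃ z : ℤ, A i j = z) ∧ |A i j| ≤ Δ₂)
    (hC : ∀ i j, (∃ z : ℤ, C i j = z) ∧ |C i j| ≤ Δ₂)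
    (hw : w = 3 * Real.sqrt Δ₁ * Δ₂ ^ 2 * n * d)
    (B : Matrix (Fin n ⊕ Fin k) (Fin d) ℝ) (hB : B = Matrix.fromRows A (w • Cᵀ))
    (K2k : Matrix (Fin n ⊕ Fin k) (Fin n ⊕ Fin k) ℝ)
    (hK2k : IsBestRank (2 * k) (B * Bᵀ) K2k)
    (N : Matrix (Fin n ⊕ Fin k) (Fin (2 * k)) ℝ)
    (happrox : frob (B * Bᵀ - N * Nᵀ) ^ 2 ≤ Δ₁ * frob (B * Bᵀ - K2k) ^ 2) :
    ∀ (i : Fin n) (j : Fin k),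
      w * (round ((N * Nᵀ) (Sum.inl i) (Sum.inr j) / w) : ℝ) = w * (A * C) i j := by
  intro i j
  rcases (show 0 ≤ w by rw [hw]; positivity).eq_or_lt with hw0 | hwpos
  · simp [← hw0]
  obtain ⟨z, hz⟩ := exists_intCast_mul_apply (fun i j => (hA i j).1) (fun i j => (hC i j).1) i j
  have hentry : (B * Bᵀ) (Sum.inl i) (Sum.inr j) = w * (A * C) i j := by
    simp [hB, transpose_fromRows]
  have hAAt : frob (A * Aᵀ) ≤ n * d * Δ₂ ^ 2 := by
    have h := frob_le_of_abs_apply_le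
      (abs_mul_apply_le (B := Aᵀ) (fun i j => (hA i j).2) (fun i j => (hA j i).2))
    rwa [Fintype.card_fin, Fintype.card_fin,
      show (n : ℝ) * n * (d * (Δ₂ * Δ₂)) ^ 2 = (n * d * Δ₂ ^ 2) ^ 2 by ring,
      Real.sqrt_sq (by positivity)] at h
  have hbest : frob (B * Bᵀ - K2k) ≤ frob (A * Aᵀ) := by
    subst hB
    exact hK2k.frob_sub_le_frob_mul_transpose (by simp)
  have herror : |(B * Bᵀ - N * Nᵀ) (Sum.inl i) (Sum.inr j)| < w / 2 := by
    calc _ ≤ frob (B * Bᵀ - N * Nᵀ) := abs_apply_le_frob _ _ _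
      _ ≤ Real.sqrt Δ₁ * frob (B * Bᵀ - K2k) := by
          rw [← Real.sqrt_sq (frob_nonneg _), ← Real.sqrt_sq (frob_nonneg (B * Bᵀ - K2k)),
            ← Real.sqrt_mul' _ (sq_nonneg _)]
          exact Real.sqrt_le_sqrt happrox
      _ ≤ Real.sqrt Δ₁ * (n * d * Δ₂ ^ 2) := by gcongr; exact hbest.trans hAAt
      _ = w / 3 := by rw [hw]; ring
      _ < w / 2 := by linarith
  rw [Matrix.sub_apply, hentry, hz, ← abs_neg, neg_sub] at herror
  rw [round_div_eq_of_abs_sub_mul_lt hwpos herror, hz]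

theorem stmt15 (n d k : ℕ) (A : Matrix (Fin n) (Fin d) ℝ) (C : Matrix (Fin d) (Fin k) ℝ)
    (Δ₁ Δ₂ w : ℝ) (hΔ₁ : 1 ≤ Δ₁) (hΔ₂ : 0 < Δ₂)
    (hA : ∀ i j, (∃ z : ℤ, A i j = z) ∧ |A i j| ≤ Δ₂)
    (hC : ∀ i j, (∃ z : ℤ, C i j = z) ∧ |C i j| ≤ Δ₂)
    (hw : w = 3 * Real.sqrt Δ₁ * Δ₂ ^ 2 * n * d)
    (B : Matrix (Fin n ⊕ Fin k) (Fin d) ℝ) (hB : B = Matrix.fromRows A (w • Cᵀ))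
    (K2k : Matrix (Fin n ⊕ Fin k) (Fin n ⊕ Fin k) ℝ)
    (hK2k : IsBestRank (2 * k) (B * Bᵀ) K2k)
    (N : Matrix (Fin n ⊕ Fin k) (Fin (2 * k)) ℝ)
    (happrox : frob (B * Bᵀ - N * Nᵀ) ^ 2 ≤ Δ₁ * frob (B * Bᵀ - K2k) ^ 2) :
    ∀ (i : Fin n) (j : Fin k),
      w * (round ((N * Nᵀ) (Sum.inl i) (Sum.inr j) / w) : ℝ) = w * (A * C) i j :=
  stmt15_general n d k A C Δ₁ Δ₂ w hA hC hw B hB K2k hK2k N happrox
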